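/- For t > 0 and η = 1/t, for any real numbers e₀, …, e_n, the iterated time integral ∫_{s ∈ ℝ₊^{n+1}, ∑s_j = t} ∏_{j=0}^n e^{−i s_j e_j} ds (the integral of ∏ e^{−is_je_j} against the surface measure δ(t − ∑_{j=0}^n s_j)) equals (e^{ηt}/(2π)) ∫_ℝ e^{−iαt} ∏_{j=0}^n i/(α − e_j + iη) dα. -/

import Mathlib

/-!
Put `c_j = η + i e_j`. The damping `e^{-η s_j}` multiplies the integrand by `e^{-ηt}` on the
simplex, and the damped integral is the iterated convolution, evaluated at `t`, of the one-sided
exponentials `s ↦ e^{-c_j s} 𝟙_{s ≥ 0}`. These are integrable with Fourier transform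
`(c_j + 2πiξ)⁻¹`, so the convolution has Fourier transform `∏ j (c_j + 2πiξ)⁻¹`; with at least two
factors this is integrable, and the convolution is continuous. Fourier inversion at `t` and the
substitution `α = -2πξ` give the right-hand side.
-/

open MeasureTheory Real Set FourierTransform Convolution ContinuousLinearMap

noncomputable def oneSidedExp (c : ℂ) : ℝ → ℂ :=
  (Ici 0).indicator fun s => Complex.exp (-(c * s))

section OneSidedExp

variable {c : ℂ} {s : ℝ}

lemma oneSidedExp_of_nonneg (hs : 0 ≤ s) : oneSidedExp c s = Complex.exp (-(c * s)) :=
  indicator_of_mem (mem_Ici.mpr hs) _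

lemma oneSidedExp_of_neg (hs : s < 0) : oneSidedExp c s = 0 :=
  indicator_of_notMem (by simpa using hs) _

lemma norm_oneSidedExp_le_one (hc : 0 ≤ c.re) (s : ℝ) : ‖oneSidedExp c s‖ ≤ 1 := by
  rcases lt_or_ge s 0 with hs | hs
  · simp [oneSidedExp_of_neg hs]
  · rw [oneSidedExp_of_nonneg hs, Complex.norm_exp, Real.exp_le_one_iff]
    simpa using mul_nonneg hc hs

lemma oneSidedExp_ofReal_add (η : ℝ) :
    oneSidedExp (η + c) s = Real.exp (-(η * s)) * oneSidedExp c s := by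
  rcases lt_or_ge s 0 with hs | hs
  · simp [oneSidedExp_of_neg hs]
  · rw [oneSidedExp_of_nonneg hs, oneSidedExp_of_nonneg hs, Complex.ofReal_exp, ← Complex.exp_add]
    push_cast
    ring_nf

lemma measurable_oneSidedExp : Measurable (oneSidedExp c) :=
  (by fun_prop : Measurable fun s : ℝ => Complex.exp (-(c * s))).indicator measurableSet_Ici

lemma integrable_oneSidedExp (hc : 0 < c.re) : Integrable (oneSidedExp c) := by
  rw [oneSidedExp, integrable_indicator_iff measurableSet_Ici,
    integrableOn_Ici_iff_integrableOn_Ioi]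
  simpa using integrableOn_exp_mul_complex_Ioi (a := -c) (by simpa using hc) 0

lemma fourier_oneSidedExp (hc : 0 < c.re) (ξ : ℝ) :
    𝓕 (oneSidedExp c) ξ = (c + (2 * π * ξ : ℝ) * Complex.I)⁻¹ := by
  have hre : (-(c + (2 * π * ξ : ℝ) * Complex.I)).re < 0 := by simpa using hc
  have hintegrand : (fun x : ℝ => Complex.exp ((-2 * π * x * ξ : ℝ) * Complex.I) • oneSidedExp c x)
      = (Ici 0).indicator fun x : ℝ =>
          Complex.exp (-(c + (2 * π * ξ : ℝ) * Complex.I) * x) := by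
    ext x
    rcases lt_or_ge x 0 with hx | hx
    · simp [oneSidedExp_of_neg hx, hx]
    · rw [oneSidedExp_of_nonneg hx, indicator_of_mem (mem_Ici.mpr hx), smul_eq_mul,
        ← Complex.exp_add]
      push_cast
      ring_nf
  rw [Real.fourier_real_eq_integral_exp_smul, hintegrand, integral_indicator measurableSet_Ici,
    integral_Ici_eq_integral_Ioi, integral_exp_mul_complex_Ioi hre]
  field_simp
  simp

lemma continuousAt_oneSidedExp (hs : s ≠ 0) : ContinuousAt (oneSidedExp c) s := by
  rcases hs.lt_or_gt with hs | hs
  · refine (continuousAt_const (y := (0 : ℂ))).congr ?_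
    filter_upwards [Iio_mem_nhds hs] with x hx
    exact (oneSidedExp_of_neg hx).symm
  · refine (by fun_prop : ContinuousAt (fun x : ℝ => Complex.exp (-(c * x))) s).congr ?_
    filter_upwards [Ioi_mem_nhds hs] with x hx
    exact (oneSidedExp_of_nonneg hx.le).symm

lemma continuous_oneSidedExp_convolution (hc : 0 ≤ c.re) {g : ℝ → ℂ} (hg : Integrable g) :
    Continuous (oneSidedExp c ⋆[mul ℂ ℂ] g) := by
  refine continuous_iff_continuousAt.mpr fun x₀ => ?_
  -- for fixed `u`, the integrand is continuous in `x` away from the single jump at `x = u`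
  rw [show oneSidedExp c ⋆[mul ℂ ℂ] g = fun x => ∫ u, oneSidedExp c (x - u) * g u from
    funext fun x => convolution_mul_swap]
  refine continuousAt_of_dominated (bound := fun u => ‖g u‖) ?_ ?_ hg.norm ?_
  · exact .of_forall fun x => (measurable_oneSidedExp.comp
      (measurable_const.sub measurable_id)).aestronglyMeasurable.mul hg.1
  · filter_upwards with x
    filter_upwards with u
    rw [norm_mul]
    exact mul_le_of_le_one_left (norm_nonneg _) (norm_oneSidedExp_le_one hc _)
  · filter_upwards [volume.ae_ne x₀] with u hu
    exact ((continuousAt_oneSidedExp (sub_ne_zero.mpr hu.symm)).comp (f := fun x => x - u)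
      (by fun_prop)).mul continuousAt_const

end OneSidedExp

lemma integral_fin_cons {E : Type*} [NormedAddCommGroup E] [NormedSpace ℝ E] {m : ℕ}
    {f : (Fin (m + 1) → ℝ) → E} (hf : Integrable f) :
    ∫ x, f x = ∫ a, ∫ s, f (Fin.cons a s) := by
  set e := MeasurableEquiv.piFinSuccAbove (fun _ : Fin (m + 1) => ℝ) 0
  have hmp : MeasurePreserving e.symm := (volume_preserving_piFinSuccAbove _ 0).symm
  have hcons : ⇑e.symm = fun p => Fin.cons p.1 p.2 := by
    ext p : 1
    simp [e, MeasurableEquiv.piFinSuccAbove_symm_apply, Fin.insertNthEquiv]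
  rw [← hmp.integrable_comp_emb e.symm.measurableEmbedding, hcons] at hf
  rw [← hmp.integral_comp', hcons]
  exact integral_prod _ hf

noncomputable def simplexKernel {m : ℕ} (c : Fin (m + 1) → ℂ) (τ : ℝ) (s : Fin m → ℝ) : ℂ :=
  (∏ j, oneSidedExp (c j.succ) (s j)) * oneSidedExp (c 0) (τ - ∑ j, s j)

noncomputable def simplexIntegral {m : ℕ} (c : Fin (m + 1) → ℂ) (τ : ℝ) : ℂ :=
  ∫ s, simplexKernel c τ s

section Simplex

variable {m : ℕ}

lemma simplexKernel_cons (c : Fin (m + 2) → ℂ) (τ a : ℝ) (s : Fin m → ℝ) :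
    simplexKernel c τ (Fin.cons a s) =
      oneSidedExp (c 1) a * simplexKernel (Fin.removeNth 1 c) (τ - a) s := by
  simp only [simplexKernel, Fin.prod_univ_succ, Fin.sum_cons, Fin.cons_zero, Fin.cons_succ,
    Fin.removeNth_apply, Fin.succ_zero_eq_one, Fin.one_succAbove_succ, Fin.one_succAbove_zero,
    sub_add_eq_sub_sub]
  ring

lemma simplexKernel_ofReal_add (η : ℝ) (c : Fin (m + 1) → ℂ) (τ : ℝ) (s : Fin m → ℝ) :
    simplexKernel (fun j => η + c j) τ s = Real.exp (-(η * τ)) * simplexKernel c τ s := by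
  simp only [simplexKernel, oneSidedExp_ofReal_add, Finset.prod_mul_distrib]
  rw [← Complex.ofReal_prod, ← Real.exp_sum, mul_mul_mul_comm, ← Complex.ofReal_mul,
    ← Real.exp_add, Finset.sum_neg_distrib, ← Finset.mul_sum]
  ring_nf

lemma simplexIntegral_ofReal_add (η : ℝ) (c : Fin (m + 1) → ℂ) (τ : ℝ) :
    simplexIntegral (fun j => η + c j) τ = Real.exp (-(η * τ)) * simplexIntegral c τ := by
  simp only [simplexIntegral, simplexKernel_ofReal_add, integral_const_mul]

lemma setIntegral_simplex_eq_simplexIntegral (c : Fin (m + 1) → ℂ) (τ : ℝ) :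
    ∫ s in {s : Fin m → ℝ | (∀ j, 0 ≤ s j) ∧ ∑ j, s j ≤ τ},
      (∏ j, Complex.exp (-(c j.succ * s j))) * Complex.exp (-(c 0 * (τ - ∑ j, s j : ℝ)))
      = simplexIntegral c τ := by
  set S := {s : Fin m → ℝ | (∀ j, 0 ≤ s j) ∧ ∑ j, s j ≤ τ}
  have hS : MeasurableSet S := by measurability
  rw [← integral_indicator hS, simplexIntegral]
  congr 1 with s
  by_cases hs : s ∈ S
  · rw [indicator_of_mem hs, simplexKernel, oneSidedExp_of_nonneg (sub_nonneg.mpr hs.2)]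
    simp_rw [oneSidedExp_of_nonneg (hs.1 _)]
  · rw [indicator_of_notMem hs, simplexKernel]
    simp only [S, mem_ofPred_eq, not_and_or, not_forall, not_le] at hs
    rcases hs with ⟨j, hj⟩ | hsum
    · rw [Finset.prod_eq_zero (Finset.mem_univ j) (oneSidedExp_of_neg hj), zero_mul]
    · rw [oneSidedExp_of_neg (sub_neg.mpr hsum), mul_zero]

lemma integrable_simplexKernel {c : Fin (m + 1) → ℂ} (hc : ∀ j, 0 < (c j).re) (τ : ℝ) :
    Integrable (simplexKernel c τ) := by
  have hprod : Integrable fun s : Fin m → ℝ => ∏ j, oneSidedExp (c j.succ) (s j) := by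
    rw [volume_pi]
    exact Integrable.fintype_prod fun j => integrable_oneSidedExp (hc j.succ)
  refine hprod.mul_bdd (c := 1) ?_ (.of_forall fun s => norm_oneSidedExp_le_one (hc 0).le _)
  exact (measurable_oneSidedExp.comp (by fun_prop)).aestronglyMeasurable

lemma simplexIntegral_zero (c : Fin 1 → ℂ) : simplexIntegral c = oneSidedExp (c 0) := by
  ext τ
  simp [simplexIntegral, simplexKernel, integral_unique, volume_pi, Measure.real]

lemma simplexIntegral_succ {c : Fin (m + 2) → ℂ} (hc : ∀ j, 0 < (c j).re) :
    simplexIntegral c = oneSidedExp (c 1) ⋆[mul ℂ ℂ] simplexIntegral (Fin.removeNth 1 c) := by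
  ext τ
  simp only [simplexIntegral, convolution_def, mul_apply',
    integral_fin_cons (integrable_simplexKernel hc τ), simplexKernel_cons, integral_const_mul]

lemma integrable_simplexIntegral {c : Fin (m + 1) → ℂ} (hc : ∀ j, 0 < (c j).re) :
    Integrable (simplexIntegral c) := by
  induction m with
  | zero => simpa [simplexIntegral_zero] using integrable_oneSidedExp (hc 0)
  | succ m ih =>
    rw [simplexIntegral_succ hc]
    exact (integrable_oneSidedExp (hc 1)).integrable_convolution _ (ih fun j => hc _)

lemma fourier_simplexIntegral {c : Fin (m + 1) → ℂ} (hc : ∀ j, 0 < (c j).re) (ξ : ℝ) :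
    𝓕 (simplexIntegral c) ξ = ∏ j, (c j + (2 * π * ξ : ℝ) * Complex.I)⁻¹ := by
  induction m with
  | zero => simp [simplexIntegral_zero, fourier_oneSidedExp (hc 0)]
  | succ m ih =>
    rw [simplexIntegral_succ hc, Real.fourier_mul_convolution_eq (integrable_oneSidedExp (hc 1))
      (integrable_simplexIntegral (c := Fin.removeNth 1 c) fun j => hc _),
      fourier_oneSidedExp (hc 1), ih (c := Fin.removeNth 1 c) fun j => hc _,
      Fin.prod_univ_succAbove (fun j => (c j + (2 * π * ξ : ℝ) * Complex.I)⁻¹) 1]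
    rfl

lemma continuous_simplexIntegral {c : Fin (m + 2) → ℂ} (hc : ∀ j, 0 < (c j).re) :
    Continuous (simplexIntegral c) := by
  rw [simplexIntegral_succ hc]
  exact continuous_oneSidedExp_convolution (hc 1).le (integrable_simplexIntegral fun j => hc _)

end Simplex

lemma norm_inv_add_mul_I_le {c : ℂ} (hc : 0 < c.re) (y : ℝ) :
    ‖(c + y * Complex.I)⁻¹‖ ≤ c.re⁻¹ := by
  rw [norm_inv]
  refine inv_anti₀ hc ?_
  calc c.re = (c + y * Complex.I).re := by simp
    _ ≤ ‖c + y * Complex.I‖ := Complex.re_le_norm _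

lemma integrable_norm_inv_add_mul_I_sq {c : ℂ} (hc : 0 < c.re) :
    Integrable fun ξ : ℝ => ‖(c + (2 * π * ξ : ℝ) * Complex.I)⁻¹‖ ^ 2 := by
  have h := ((integrable_inv_one_add_sq.comp_add_right (c.im / c.re)).comp_mul_left'
    (R := 2 * π / c.re) (by positivity)).const_mul (c.re ^ 2)⁻¹
  refine h.congr (.of_forall fun ξ => ?_)
  dsimp only
  rw [norm_inv, inv_pow, Complex.sq_norm, Complex.normSq_apply]
  simp only [Complex.add_re, Complex.add_im, Complex.mul_I_re, Complex.mul_I_im,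
    Complex.ofReal_re, Complex.ofReal_im, neg_zero, add_zero]
  field_simp
  ring

lemma integrable_prod_inv_add_mul_I {m : ℕ} {c : Fin (m + 2) → ℂ} (hc : ∀ j, 0 < (c j).re) :
    Integrable fun ξ : ℝ => ∏ j, (c j + (2 * π * ξ : ℝ) * Complex.I)⁻¹ := by
  set z : Fin (m + 2) → ℝ → ℂ := fun j ξ => (c j + (2 * π * ξ : ℝ) * Complex.I)⁻¹
  have hz : ∀ j, Measurable (z j) := fun j => by fun_prop
  -- two factors are square integrable, the remaining ones are bounded
  have hpair : Integrable fun ξ => z 0 ξ * z 1 ξ := by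
    refine (((integrable_norm_inv_add_mul_I_sq (hc 0)).add
      (integrable_norm_inv_add_mul_I_sq (hc 1))).div_const 2).mono'
      ((hz 0).mul (hz 1)).aestronglyMeasurable (.of_forall fun ξ => ?_)
    rw [norm_mul, Pi.add_apply]
    linarith [two_mul_le_add_sq ‖z 0 ξ‖ ‖z 1 ξ‖]
  have hrest : ∀ ξ, ‖∏ j : Fin m, z j.succ.succ ξ‖ ≤ ∏ j : Fin m, (c j.succ.succ).re⁻¹ := by
    intro ξ
    rw [norm_prod]
    exact Finset.prod_le_prod (fun j _ => norm_nonneg _)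
      fun j _ => norm_inv_add_mul_I_le (hc _) _
  refine (hpair.mul_bdd (Finset.measurable_prod _ fun j _ => hz _).aestronglyMeasurable
    (.of_forall hrest)).congr (.of_forall fun ξ => ?_)
  simp only [z, Fin.prod_univ_succ (n := m + 1), Fin.prod_univ_succ (n := m), Fin.succ_zero_eq_one]
  ring

lemma simplexIntegral_eq_integral_exp_mul_prod_inv {m : ℕ} {c : Fin (m + 2) → ℂ}
    (hc : ∀ j, 0 < (c j).re) (τ : ℝ) :
    simplexIntegral c τ = ∫ ξ : ℝ, Complex.exp ((2 * π * ξ * τ : ℝ) * Complex.I) *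
      ∏ j, (c j + (2 * π * ξ : ℝ) * Complex.I)⁻¹ := by
  have hF : 𝓕 (simplexIntegral c) = fun ξ => ∏ j, (c j + (2 * π * ξ : ℝ) * Complex.I)⁻¹ :=
    funext (fourier_simplexIntegral hc)
  rw [← (integrable_simplexIntegral hc).fourierInv_fourier_eq
    (hF ▸ integrable_prod_inv_add_mul_I hc) (continuous_simplexIntegral hc).continuousAt,
    Real.fourierInv_eq', hF]
  congr 1 with ξ
  rw [smul_eq_mul, show 2 * π * inner ℝ ξ τ = 2 * π * ξ * τ by simp [mul_comm, mul_assoc]]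

lemma integral_exp_mul_prod_I_div_eq {m : ℕ} (η t : ℝ) (e : Fin m → ℝ) :
    ∫ α : ℝ, Complex.exp (-Complex.I * α * t) * ∏ j, Complex.I / (α - e j + Complex.I * η) =
      (2 * π : ℝ) * ∫ ξ : ℝ, Complex.exp ((2 * π * ξ * t : ℝ) * Complex.I) *
        ∏ j, ((η + Complex.I * e j) + (2 * π * ξ : ℝ) * Complex.I)⁻¹ := by
  have hpoint : ∀ ξ : ℝ, Complex.exp (-Complex.I * ((-(2 * π) * ξ : ℝ) : ℂ) * t) *
        ∏ j, Complex.I / (((-(2 * π) * ξ : ℝ) : ℂ) - e j + Complex.I * η) =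
      Complex.exp ((2 * π * ξ * t : ℝ) * Complex.I) *
        ∏ j, ((η + Complex.I * e j) + (2 * π * ξ : ℝ) * Complex.I)⁻¹ := fun ξ => by
    congr 1
    · push_cast
      ring_nf
    · refine Finset.prod_congr rfl fun j _ => ?_
      rw [show ((-(2 * π) * ξ : ℝ) : ℂ) - e j + Complex.I * η =
          Complex.I * ((η + Complex.I * e j) + (2 * π * ξ : ℝ) * Complex.I) by
          push_cast
          linear_combination (-(e j : ℂ) - 2 * π * ξ) * Complex.I_sq,
        div_mul_cancel_left₀ Complex.I_ne_zero]
  have hcv := Measure.integral_comp_mul_left (fun α : ℝ => Complex.exp (-Complex.I * α * t) *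
    ∏ j, Complex.I / (α - e j + Complex.I * η)) (-(2 * π))
  simp only [hpoint] at hcv
  rw [hcv, abs_inv, abs_neg, abs_of_pos Real.two_pi_pos, Complex.real_smul, ← mul_assoc,
    ← Complex.ofReal_mul, mul_inv_cancel₀ Real.two_pi_pos.ne', Complex.ofReal_one, one_mul]

open MeasureTheory Real in
theorem stmt_17 (n : ℕ) (hn : 1 ≤ n) (t : ℝ) (ht : 0 < t) (e : Fin (n+1) → ℝ) :
    (∫ s in {s : Fin n → ℝ | (∀ j, 0 ≤ s j) ∧ ∑ j, s j ≤ t},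
        (∏ j : Fin n, Complex.exp (-Complex.I * ((s j : ℝ) : ℂ) * ((e j.succ : ℝ) : ℂ))) *
          Complex.exp (-Complex.I * ((t - ∑ j, s j : ℝ) : ℂ) * ((e 0 : ℝ) : ℂ)))
      = ((Real.exp ((1/t) * t) / (2 * π) : ℝ) : ℂ) *
          ∫ α : ℝ, Complex.exp (-Complex.I * ((α : ℂ)) * ((t : ℝ) : ℂ)) *
            ∏ j : Fin (n+1), (Complex.I / ((α : ℂ) - ((e j : ℝ) : ℂ) + Complex.I * ((1/t : ℝ) : ℂ))) := by
  obtain ⟨k, rfl⟩ : ∃ k, n = k + 1 := ⟨n - 1, by omega⟩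
  set η := 1 / t
  set c : Fin (k + 2) → ℂ := fun j => η + Complex.I * e j
  have hc : ∀ j, 0 < (c j).re := fun j => by simpa [c, η] using ht
  have hdamp : simplexIntegral (fun j => Complex.I * e j) t =
      Real.exp (η * t) * simplexIntegral c t := by
    rw [simplexIntegral_ofReal_add, ← mul_assoc, ← Complex.ofReal_mul, ← Real.exp_add]
    simp
  have hswap : ∀ x y : ℝ, -Complex.I * x * y = -(Complex.I * y * x) := fun x y => by ring
  rw [integral_exp_mul_prod_I_div_eq]
  simp only [hswap]
  rw [setIntegral_simplex_eq_simplexIntegral (fun j => Complex.I * e j), hdamp,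
    simplexIntegral_eq_integral_exp_mul_prod_inv hc, Complex.ofReal_div, ← mul_assoc,
    div_mul_cancel₀ _ (Complex.ofReal_ne_zero.mpr Real.two_pi_pos.ne')]
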